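/- (Higher-order differential equation for Sobolev orthogonal polynomials.) For every n ≥ m one has s̃_n + Σ_{l=1}^{m} χ_l·Δ^{2l}s̃_n = Δ^m p_{n+m} + Σ_{l=1}^{2m} (⟨s̃_n, 𝒢^m p_{n+m−l}⟩_{S^m}/‖p_{n+m−l}‖₂²)·Δ^m p_{n+m−l}. -/

import Mathlib

/-!
Put `u = Σ_{l=0}^m χ_l 𝒢^{m-l} Δ^l s̃_n`. Symmetry of `𝒢` and `Δ𝒢 = id` give
`⟨u, v⟩₂ = ⟨s̃_n, 𝒢^m v⟩_{S^m}` for every polynomial `v`, and `Δ^m u = Σ_l χ_l Δ^{2l} s̃_n`.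
Since `u` is monic of degree `n + m`, its expansion in the orthogonal basis `(p_j)` reads
`u = p_{n+m} + Σ_{j<n+m} ⟨s̃_n, 𝒢^m p_j⟩_{S^m}/‖p_j‖² p_j`, and the coefficients with `j + m < n`
vanish because then `𝒢^m p_j ∈ W_{n-1}`. Applying `Δ^m` gives the equation.
-/

open Filter RealInnerProductSpace

variable {H : Type*} [NormedAddCommGroup H] [InnerProductSpace ℝ H]

/-- `Wlt P n` is the span of `P 0, …, P (n-1)`; thus `Wlt P 0 = ⊥ = W_{-1}` and
`Wlt P (n+1)` is the space `W_n = span{P_0, …, P_n}`. -/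
def Wlt (P : ℕ → H) (n : ℕ) : Submodule ℝ H := Submodule.span ℝ (P '' Set.Iio n)

/-- `Wtot P` is the space `W = ⋃ₙ Wₙ` of all polynomials. -/
def Wtot (P : ℕ → H) : Submodule ℝ H := Submodule.span ℝ (Set.range P)

/-- The order-`m` Sobolev inner product `⟨f, g⟩_{Sᵐ} = Σ_{ℓ=0}^m χ_ℓ ⟨Δ^ℓ f, Δ^ℓ g⟩₂`. -/
noncomputable def innerSm (Δ : H →ₗ[ℝ] H) (χ : ℕ → ℝ) (m : ℕ) (f g : H) : ℝ :=
  ∑ ℓ ∈ Finset.range (m + 1), χ ℓ * ⟪ (Δ ^ ℓ) f, (Δ ^ ℓ) g ⟫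

open Finset

lemma Finset.range_succ_eq_insert_Icc (m : ℕ) : range (m + 1) = insert 0 (Icc 1 m) := by
  ext; simp; omega

lemma Finset.sum_range_add_eq_sum_Icc {M : Type*} [AddCommMonoid M] {n k : ℕ} (hk : k ≤ n)
    (f : ℕ → M) (hf : ∀ j, j + k < n → f j = 0) :
    ∑ j ∈ range (n + k), f j = ∑ l ∈ Icc 1 (2 * k), f (n + k - l) := by
  calc ∑ j ∈ range (n + k), f j = ∑ j ∈ Ico (n - k) (n + k), f j := by
        refine (sum_subset (fun j hj => ?_) fun j hj hj' => hf j ?_).symm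
        · simp only [mem_Ico, mem_range] at hj ⊢; omega
        · simp only [mem_Ico, mem_range] at hj hj'; omega
    _ = ∑ l ∈ Icc 1 (2 * k), f (n + k - l) := by
        refine sum_nbij' (fun j => n + k - j) (fun l => n + k - l) ?_ ?_ ?_ ?_ ?_ <;>
          intro j hj <;> simp only [mem_Ico, mem_Icc] at hj ⊢ <;> first | omega | congr 1; omega

section Filtration

variable {P : ℕ → H}

lemma Wlt_mono {a b : ℕ} (h : a ≤ b) : Wlt P a ≤ Wlt P b :=
  Submodule.span_mono (Set.image_mono fun _ hx => lt_of_lt_of_le hx h)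

@[simp]
lemma Wlt_zero : Wlt P 0 = ⊥ := by
  simp [Wlt]

lemma Wlt_succ (k : ℕ) : Wlt P (k + 1) = Submodule.span ℝ (insert (P k) (P '' Set.Iio k)) := by
  rw [Wlt, ← Set.image_insert_eq, ← Order.Iio_succ_eq_insert, Order.succ_eq_add_one]

lemma P_mem_Wlt_succ (k : ℕ) : P k ∈ Wlt P (k + 1) :=
  Submodule.subset_span ⟨k, Nat.lt_succ_self k, rfl⟩

lemma P_notMem_Wlt (hP : LinearIndependent ℝ P) (k : ℕ) : P k ∉ Wlt P k :=
  hP.notMem_span_image (by simp)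

lemma Wlt_le_Wtot (k : ℕ) : Wlt P k ≤ Wtot P :=
  Submodule.span_mono (Set.image_subset_range P _)

lemma exists_mem_Wlt_of_mem_Wtot {u : H} (hu : u ∈ Wtot P) : ∃ k, u ∈ Wlt P k := by
  induction hu using Submodule.span_induction with
  | mem x hx => obtain ⟨j, rfl⟩ := hx; exact ⟨j + 1, P_mem_Wlt_succ j⟩
  | zero => exact ⟨0, zero_mem _⟩
  | add x y _ _ hx hy =>
      obtain ⟨a, ha⟩ := hx
      obtain ⟨b, hb⟩ := hy
      exact ⟨max a b, add_mem (Wlt_mono (le_max_left a b) ha) (Wlt_mono (le_max_right a b) hb)⟩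
  | smul c x _ hx => obtain ⟨k, hk⟩ := hx; exact ⟨k, Submodule.smul_mem _ c hk⟩

def IsMonicOfDegree (P : ℕ → H) (k : ℕ) (w : H) : Prop := w - P k ∈ Wlt P k

lemma IsMonicOfDegree.mem_Wlt_succ {k : ℕ} {w : H} (hw : IsMonicOfDegree P k w) :
    w ∈ Wlt P (k + 1) := by
  simpa using add_mem (Wlt_mono k.le_succ hw) (P_mem_Wlt_succ k)

lemma IsMonicOfDegree.mem_Wtot {k : ℕ} {w : H} (hw : IsMonicOfDegree P k w) : w ∈ Wtot P :=
  Wlt_le_Wtot _ hw.mem_Wlt_succ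

lemma IsMonicOfDegree.ne_zero (hP : LinearIndependent ℝ P) {k : ℕ} {w : H}
    (hw : IsMonicOfDegree P k w) : w ≠ 0 := by
  rintro rfl
  exact P_notMem_Wlt hP k (by simpa [IsMonicOfDegree] using hw)

end Filtration

section Operators

variable {P : ℕ → H} {Δ G : H →ₗ[ℝ] H}

lemma lap_mem_Wlt_pred (hΔ0 : Δ (P 0) = 0) (hΔsucc : ∀ n, Δ (P (n + 1)) = P n)
    {k : ℕ} {u : H} (hu : u ∈ Wlt P k) : Δ u ∈ Wlt P (k - 1) := by
  induction hu using Submodule.span_induction with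
  | mem x hx =>
      obtain ⟨j, hj, rfl⟩ := hx
      cases j with
      | zero => simp [hΔ0]
      | succ i =>
          rw [hΔsucc]
          exact Submodule.subset_span ⟨i, by simp only [Set.mem_Iio] at hj ⊢; omega, rfl⟩
  | zero => simp
  | add x y _ _ hx hy => simpa using add_mem hx hy
  | smul c x _ hx => simpa using Submodule.smul_mem _ c hx

lemma lapPow_mem_Wlt_sub (hΔ0 : Δ (P 0) = 0) (hΔsucc : ∀ n, Δ (P (n + 1)) = P n)
    (l : ℕ) {k : ℕ} {u : H} (hu : u ∈ Wlt P k) : (Δ ^ l) u ∈ Wlt P (k - l) := by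
  induction l with
  | zero => simpa using hu
  | succ l ih =>
      rw [pow_succ', Module.End.mul_apply, ← Nat.sub_sub]
      exact lap_mem_Wlt_pred hΔ0 hΔsucc ih

lemma lapPow_mem_Wtot (hΔ0 : Δ (P 0) = 0) (hΔsucc : ∀ n, Δ (P (n + 1)) = P n)
    (l : ℕ) {u : H} (hu : u ∈ Wtot P) : (Δ ^ l) u ∈ Wtot P := by
  obtain ⟨k, hk⟩ := exists_mem_Wlt_of_mem_Wtot hu
  exact Wlt_le_Wtot _ (lapPow_mem_Wlt_sub hΔ0 hΔsucc l hk)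

lemma green_mem_Wlt_succ (hGmap : ∀ n, ∀ u ∈ Wlt P (n + 1), G u ∈ Wlt P (n + 2))
    {k : ℕ} {u : H} (hu : u ∈ Wlt P k) : G u ∈ Wlt P (k + 1) := by
  cases k with
  | zero => simp_all
  | succ n => exact hGmap n u hu

lemma greenPow_mem_Wlt_add (hGmap : ∀ n, ∀ u ∈ Wlt P (n + 1), G u ∈ Wlt P (n + 2))
    (j : ℕ) {k : ℕ} {u : H} (hu : u ∈ Wlt P k) : (G ^ j) u ∈ Wlt P (k + j) := by
  induction j with
  | zero => simpa using hu
  | succ j ih =>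
      rw [pow_succ', Module.End.mul_apply]
      exact green_mem_Wlt_succ hGmap ih

lemma greenPow_mem_Wtot (hGmap : ∀ n, ∀ u ∈ Wlt P (n + 1), G u ∈ Wlt P (n + 2))
    (j : ℕ) {u : H} (hu : u ∈ Wtot P) : (G ^ j) u ∈ Wtot P := by
  obtain ⟨k, hk⟩ := exists_mem_Wlt_of_mem_Wtot hu
  exact Wlt_le_Wtot _ (greenPow_mem_Wlt_add hGmap j hk)

lemma lapPow_greenPow (hGinv : ∀ u ∈ Wtot P, Δ (G u) = u)
    (hGmap : ∀ n, ∀ u ∈ Wlt P (n + 1), G u ∈ Wlt P (n + 2))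
    (k : ℕ) {u : H} (hu : u ∈ Wtot P) : (Δ ^ k) ((G ^ k) u) = u := by
  induction k with
  | zero => simp
  | succ k ih =>
      rw [pow_succ, pow_succ', Module.End.mul_apply, Module.End.mul_apply,
        hGinv _ (greenPow_mem_Wtot hGmap k hu), ih]

lemma lapPow_greenPow_of_le (hGinv : ∀ u ∈ Wtot P, Δ (G u) = u)
    (hGmap : ∀ n, ∀ u ∈ Wlt P (n + 1), G u ∈ Wlt P (n + 2))
    {l m : ℕ} (hlm : l ≤ m) {u : H} (hu : u ∈ Wtot P) :
    (Δ ^ l) ((G ^ m) u) = (G ^ (m - l)) u := by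
  rw [← Nat.add_sub_cancel' hlm, pow_add, Module.End.mul_apply, Nat.add_sub_cancel_left,
    lapPow_greenPow hGinv hGmap l (greenPow_mem_Wtot hGmap _ hu)]

lemma inner_greenPow_left (hGsym : ∀ u ∈ Wtot P, ∀ v ∈ Wtot P, ⟪G u, v⟫ = ⟪u, G v⟫)
    (hGmap : ∀ n, ∀ u ∈ Wlt P (n + 1), G u ∈ Wlt P (n + 2))
    (k : ℕ) {u v : H} (hu : u ∈ Wtot P) (hv : v ∈ Wtot P) :
    ⟪(G ^ k) u, v⟫ = ⟪u, (G ^ k) v⟫ := by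
  induction k generalizing v with
  | zero => simp
  | succ k ih =>
      have hGv : G v ∈ Wtot P := by simpa using greenPow_mem_Wtot hGmap 1 hv
      calc ⟪(G ^ (k + 1)) u, v⟫ = ⟪G ((G ^ k) u), v⟫ := by rw [pow_succ', Module.End.mul_apply]
        _ = ⟪(G ^ k) u, G v⟫ := hGsym _ (greenPow_mem_Wtot hGmap k hu) v hv
        _ = ⟪u, (G ^ k) (G v)⟫ := ih hGv
        _ = ⟪u, (G ^ (k + 1)) v⟫ := by rw [pow_succ, Module.End.mul_apply]

lemma IsMonicOfDegree.green (hP : LinearIndependent ℝ P)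
    (hΔ0 : Δ (P 0) = 0) (hΔsucc : ∀ n, Δ (P (n + 1)) = P n)
    (hGinv : ∀ u ∈ Wtot P, Δ (G u) = u)
    (hGmap : ∀ n, ∀ u ∈ Wlt P (n + 1), G u ∈ Wlt P (n + 2))
    {k : ℕ} {w : H} (hw : IsMonicOfDegree P k w) : IsMonicOfDegree P (k + 1) (G w) := by
  obtain ⟨c, z, hz, hGw⟩ := (Wlt_succ (k + 1)).le (green_mem_Wlt_succ hGmap hw.mem_Wlt_succ)
    |> Submodule.mem_span_insert.mp
  have hw_eq : w = c • P k + Δ z := by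
    rw [← hGinv w hw.mem_Wtot, hGw, map_add, map_smul, hΔsucc]
  have hc : c = 1 := by
    have hmem : (c - 1) • P k ∈ Wlt P k := by
      have h : (c - 1) • P k = (w - P k) - Δ z := by rw [hw_eq]; module
      rw [h]
      exact sub_mem hw (by simpa using lap_mem_Wlt_pred hΔ0 hΔsucc (k := k + 1) hz)
    by_contra hne
    exact P_notMem_Wlt hP k ((Submodule.smul_mem_iff _ (sub_ne_zero.mpr hne)).mp hmem)
  rw [IsMonicOfDegree, hGw, hc, one_smul, add_sub_cancel_left]
  exact hz

lemma IsMonicOfDegree.greenPow (hP : LinearIndependent ℝ P)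
    (hΔ0 : Δ (P 0) = 0) (hΔsucc : ∀ n, Δ (P (n + 1)) = P n)
    (hGinv : ∀ u ∈ Wtot P, Δ (G u) = u)
    (hGmap : ∀ n, ∀ u ∈ Wlt P (n + 1), G u ∈ Wlt P (n + 2))
    (j : ℕ) {k : ℕ} {w : H} (hw : IsMonicOfDegree P k w) :
    IsMonicOfDegree P (k + j) ((G ^ j) w) := by
  induction j with
  | zero => simpa using hw
  | succ j ih =>
      rw [pow_succ', Module.End.mul_apply, ← add_assoc]
      exact ih.green hP hΔ0 hΔsucc hGinv hGmap

end Operators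

section SobolevRiesz

variable {P : ℕ → H} {Δ G : H →ₗ[ℝ] H}

noncomputable def sobolevRiesz (Δ G : H →ₗ[ℝ] H) (χ : ℕ → ℝ) (m : ℕ) (f : H) : H :=
  ∑ l ∈ range (m + 1), χ l • (G ^ (m - l)) ((Δ ^ l) f)

lemma inner_sobolevRiesz_left (hΔ0 : Δ (P 0) = 0) (hΔsucc : ∀ n, Δ (P (n + 1)) = P n)
    (hGsym : ∀ u ∈ Wtot P, ∀ v ∈ Wtot P, ⟪G u, v⟫ = ⟪u, G v⟫)
    (hGinv : ∀ u ∈ Wtot P, Δ (G u) = u)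
    (hGmap : ∀ n, ∀ u ∈ Wlt P (n + 1), G u ∈ Wlt P (n + 2))
    (χ : ℕ → ℝ) (m : ℕ) {f v : H} (hf : f ∈ Wtot P) (hv : v ∈ Wtot P) :
    ⟪sobolevRiesz Δ G χ m f, v⟫ = innerSm Δ χ m f ((G ^ m) v) := by
  rw [sobolevRiesz, sum_inner, innerSm]
  refine sum_congr rfl fun l hl => ?_
  have hlm : l ≤ m := by simpa [Nat.lt_succ_iff] using hl
  rw [real_inner_smul_left, lapPow_greenPow_of_le hGinv hGmap hlm hv,
    inner_greenPow_left hGsym hGmap _ (lapPow_mem_Wtot hΔ0 hΔsucc l hf) hv]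

lemma lapPow_sobolevRiesz (hΔ0 : Δ (P 0) = 0) (hΔsucc : ∀ n, Δ (P (n + 1)) = P n)
    (hGinv : ∀ u ∈ Wtot P, Δ (G u) = u)
    (hGmap : ∀ n, ∀ u ∈ Wlt P (n + 1), G u ∈ Wlt P (n + 2))
    {χ : ℕ → ℝ} (hχ0 : χ 0 = 1) (m : ℕ) {f : H} (hf : f ∈ Wtot P) :
    (Δ ^ m) (sobolevRiesz Δ G χ m f) = f + ∑ l ∈ Icc 1 m, χ l • (Δ ^ (2 * l)) f := by
  have hterm : ∀ l ∈ range (m + 1),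
      (Δ ^ m) (χ l • (G ^ (m - l)) ((Δ ^ l) f)) = χ l • (Δ ^ (2 * l)) f := by
    intro l hl
    have hlm : l ≤ m := by simpa [Nat.lt_succ_iff] using hl
    rw [map_smul, ← Nat.add_sub_cancel' hlm, pow_add, Module.End.mul_apply,
      Nat.add_sub_cancel_left, lapPow_greenPow hGinv hGmap _ (lapPow_mem_Wtot hΔ0 hΔsucc l hf),
      two_mul, pow_add, Module.End.mul_apply]
  rw [sobolevRiesz, map_sum, sum_congr rfl hterm, range_succ_eq_insert_Icc,
    sum_insert (by simp)]
  simp [hχ0]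

lemma IsMonicOfDegree.sobolevRiesz (hP : LinearIndependent ℝ P)
    (hΔ0 : Δ (P 0) = 0) (hΔsucc : ∀ n, Δ (P (n + 1)) = P n)
    (hGinv : ∀ u ∈ Wtot P, Δ (G u) = u)
    (hGmap : ∀ n, ∀ u ∈ Wlt P (n + 1), G u ∈ Wlt P (n + 2))
    {χ : ℕ → ℝ} (hχ0 : χ 0 = 1) (m : ℕ) {k : ℕ} {f : H} (hf : IsMonicOfDegree P k f) :
    IsMonicOfDegree P (k + m) (sobolevRiesz Δ G χ m f) := by
  have hlower : ∀ l ∈ Icc 1 m, χ l • (G ^ (m - l)) ((Δ ^ l) f) ∈ Wlt P (k + m) := by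
    intro l hl
    rw [mem_Icc] at hl
    refine Submodule.smul_mem _ _ (Wlt_mono ?_ (greenPow_mem_Wlt_add hGmap (m - l)
      (lapPow_mem_Wlt_sub hΔ0 hΔsucc l hf.mem_Wlt_succ)))
    omega
  have hlead := hf.greenPow hP hΔ0 hΔsucc hGinv hGmap m
  rw [IsMonicOfDegree, _root_.sobolevRiesz, range_succ_eq_insert_Icc, sum_insert (by simp)]
  simpa [hχ0, add_sub_right_comm] using add_mem hlead (Submodule.sum_mem _ hlower)

end SobolevRiesz

section Orthogonal

variable {P p : ℕ → H}

lemma Wlt_le_span_image (hpmonic : ∀ n, IsMonicOfDegree P n (p n)) (k : ℕ) :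
    Wlt P k ≤ Submodule.span ℝ (p '' Set.Iio k) := by
  induction k with
  | zero => simp
  | succ k ih =>
      have hmono : Submodule.span ℝ (p '' Set.Iio k) ≤ Submodule.span ℝ (p '' Set.Iio (k + 1)) :=
        Submodule.span_mono (Set.image_mono fun _ hj => Nat.lt_succ_of_lt hj)
      rw [Wlt_succ, Submodule.span_le, Set.insert_subset_iff]
      refine ⟨?_, (Submodule.span_le.mp ih).trans hmono⟩
      rw [SetLike.mem_coe, ← sub_sub_cancel (p k) (P k)]
      exact sub_mem (Submodule.subset_span ⟨k, Nat.lt_succ_self k, rfl⟩) (hmono (ih (hpmonic k)))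

lemma inner_p_eq_zero_of_ne (hpmonic : ∀ n, IsMonicOfDegree P n (p n))
    (hportho : ∀ n, ∀ w ∈ Wlt P n, ⟪p n, w⟫ = 0) {i j : ℕ} (hij : i ≠ j) :
    ⟪p i, p j⟫ = 0 := by
  rcases hij.lt_or_gt with h | h
  · rw [real_inner_comm]
    exact hportho j _ (Wlt_mono h (hpmonic i).mem_Wlt_succ)
  · exact hportho i _ (Wlt_mono h (hpmonic j).mem_Wlt_succ)

lemma eq_sum_inner_smul_of_mem_Wlt (hP : LinearIndependent ℝ P)
    (hpmonic : ∀ n, IsMonicOfDegree P n (p n))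
    (hportho : ∀ n, ∀ w ∈ Wlt P n, ⟪p n, w⟫ = 0) {N : ℕ} {r : H} (hr : r ∈ Wlt P N) :
    r = ∑ j ∈ range N, (⟪r, p j⟫ / ‖p j‖ ^ 2) • p j := by
  have hp : ∀ j ∈ range N, p j ∈ Wlt P N := fun j hj =>
    Wlt_mono (mem_range.mp hj) (hpmonic j).mem_Wlt_succ
  set d := r - ∑ j ∈ range N, (⟪r, p j⟫ / ‖p j‖ ^ 2) • p j
  have hd : d ∈ Submodule.span ℝ (p '' Set.Iio N) :=
    Wlt_le_span_image hpmonic N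
      (sub_mem hr (Submodule.sum_mem _ fun j hj => Submodule.smul_mem _ _ (hp j hj)))
  have hd_orth : Submodule.span ℝ (p '' Set.Iio N) ≤ (ℝ ∙ d)ᗮ := by
    rw [Submodule.span_le]
    rintro _ ⟨j, hj, rfl⟩
    rw [SetLike.mem_coe, Submodule.mem_orthogonal_singleton_iff_inner_right, inner_sub_left,
      sum_inner, sum_eq_single_of_mem j (mem_range.mpr hj) fun i _ hij => by
        rw [real_inner_smul_left, inner_p_eq_zero_of_ne hpmonic hportho hij, mul_zero],
      real_inner_smul_left, real_inner_self_eq_norm_sq,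
      div_mul_cancel₀ _ (pow_ne_zero 2 (norm_ne_zero_iff.mpr ((hpmonic j).ne_zero hP))), sub_self]
  exact (sub_eq_zero.mp
    (inner_self_eq_zero.mp (Submodule.mem_orthogonal_singleton_iff_inner_right.mp (hd_orth hd))))

lemma IsMonicOfDegree.eq_add_sum_inner_smul (hP : LinearIndependent ℝ P)
    (hpmonic : ∀ n, IsMonicOfDegree P n (p n))
    (hportho : ∀ n, ∀ w ∈ Wlt P n, ⟪p n, w⟫ = 0) {N : ℕ} {u : H} (hu : IsMonicOfDegree P N u) :
    u = p N + ∑ j ∈ range N, (⟪u, p j⟫ / ‖p j‖ ^ 2) • p j := by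
  have hr : u - p N ∈ Wlt P N := by
    rw [← sub_sub_sub_cancel_right u (p N) (P N)]
    exact sub_mem hu (hpmonic N)
  have hinner : ∀ j ∈ range N, ⟪u - p N, p j⟫ = ⟪u, p j⟫ := fun j hj => by
    rw [inner_sub_left, inner_p_eq_zero_of_ne hpmonic hportho (mem_range.mp hj).ne', sub_zero]
  rw [← sub_eq_iff_eq_add', eq_sum_inner_smul_of_mem_Wlt hP hpmonic hportho hr]
  exact sum_congr rfl fun j hj => by rw [hinner j hj]

end Orthogonal

theorem statement18_general
    (P : ℕ → H) (hP : LinearIndependent ℝ P)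
    (Δ G : H →ₗ[ℝ] H)
    (hΔ0 : Δ (P 0) = 0) (hΔsucc : ∀ n, Δ (P (n + 1)) = P n)
    (hGsym : ∀ u ∈ Wtot P, ∀ v ∈ Wtot P, ⟪ G u, v ⟫ = ⟪ u, G v ⟫)
    (hGinv : ∀ u ∈ Wtot P, Δ (G u) = u)
    (hGmap : ∀ n, ∀ u ∈ Wlt P (n + 1), G u ∈ Wlt P (n + 2))
    (m : ℕ)
    (χ : ℕ → ℝ) (hχ0 : χ 0 = 1)
    (p st : ℕ → H)
    (hpmonic : ∀ n, p n - P n ∈ Wlt P n)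
    (hportho : ∀ n, ∀ w ∈ Wlt P n, ⟪ p n, w ⟫ = 0)
    (hstmonic : ∀ n, st n - P n ∈ Wlt P n)
    (hstortho : ∀ n, ∀ w ∈ Wlt P n, innerSm Δ χ m (st n) w = 0) :
    ∀ n : ℕ, m ≤ n →
      st n + ∑ l ∈ Finset.Icc 1 m, χ l • (Δ ^ (2 * l)) (st n) =
        (Δ ^ m) (p (n + m)) +
        ∑ l ∈ Finset.Icc 1 (2 * m),
          (innerSm Δ χ m (st n) ((G ^ m) (p (n + m - l))) / ‖p (n + m - l)‖ ^ 2) •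
            (Δ ^ m) (p (n + m - l)) := by
  intro n hn
  have hst : st n ∈ Wtot P := IsMonicOfDegree.mem_Wtot (hstmonic n)
  have hcoeff : ∀ j, ⟪sobolevRiesz Δ G χ m (st n), p j⟫ = innerSm Δ χ m (st n) ((G ^ m) (p j)) :=
    fun j => inner_sobolevRiesz_left hΔ0 hΔsucc hGsym hGinv hGmap χ m hst
      (IsMonicOfDegree.mem_Wtot (hpmonic j))
  have hvanish : ∀ j, j + m < n → innerSm Δ χ m (st n) ((G ^ m) (p j)) = 0 := fun j hj =>
    hstortho n _ (Wlt_mono (by omega)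
      (greenPow_mem_Wlt_add hGmap m (IsMonicOfDegree.mem_Wlt_succ (hpmonic j))))
  have hexpand := (IsMonicOfDegree.sobolevRiesz hP hΔ0 hΔsucc hGinv hGmap hχ0 m
    (hstmonic n)).eq_add_sum_inner_smul hP hpmonic hportho
  rw [← lapPow_sobolevRiesz hΔ0 hΔsucc hGinv hGmap hχ0 m hst, hexpand, map_add, map_sum,
    sum_range_add_eq_sum_Icc hn]
  · simp only [map_smul, hcoeff]
  · intro j hj
    rw [hcoeff, hvanish j hj, zero_div, zero_smul, map_zero]

/-- Higher-order differential equation: for every `n ≥ m`,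
`s̃_n + Σ_{l=1}^m χ_l Δ^{2l} s̃_n =
  Δ^m p_{n+m} + Σ_{l=1}^{2m} (⟨s̃_n, 𝒢^m p_{n+m−l}⟩_{Sᵐ}/‖p_{n+m−l}‖₂²) Δ^m p_{n+m−l}`. -/
theorem statement18
    (P : ℕ → H) (hP : LinearIndependent ℝ P)
    (Δ G : H →ₗ[ℝ] H)
    (hΔ0 : Δ (P 0) = 0) (hΔsucc : ∀ n, Δ (P (n + 1)) = P n)
    (hGsym : ∀ u ∈ Wtot P, ∀ v ∈ Wtot P, ⟪ G u, v ⟫ = ⟪ u, G v ⟫)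
    (hGinv : ∀ u ∈ Wtot P, Δ (G u) = u)
    (hGmap : ∀ n, ∀ u ∈ Wlt P (n + 1), G u ∈ Wlt P (n + 2))
    (m : ℕ) (hm : 1 ≤ m)
    (χ : ℕ → ℝ) (hχ0 : χ 0 = 1) (hχnn : ∀ ℓ, ℓ ≤ m → 0 ≤ χ ℓ)
    (p st : ℕ → H)
    (hpmonic : ∀ n, p n - P n ∈ Wlt P n)
    (hportho : ∀ n, ∀ w ∈ Wlt P n, ⟪ p n, w ⟫ = 0)
    (hstmonic : ∀ n, st n - P n ∈ Wlt P n)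
    (hstortho : ∀ n, ∀ w ∈ Wlt P n, innerSm Δ χ m (st n) w = 0) :
    ∀ n : ℕ, m ≤ n →
      st n + ∑ l ∈ Finset.Icc 1 m, χ l • (Δ ^ (2 * l)) (st n) =
        (Δ ^ m) (p (n + m)) +
        ∑ l ∈ Finset.Icc 1 (2 * m),
          (innerSm Δ χ m (st n) ((G ^ m) (p (n + m - l))) / ‖p (n + m - l)‖ ^ 2) •
            (Δ ^ m) (p (n + m - l)) :=
  statement18_general P hP Δ G hΔ0 hΔsucc hGsym hGinv hGmap m χ hχ0 p st hpmonic hportho hstmonic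
    hstortho
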